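/- For any n×n complex matrix X and any complex number s, the 2n×2n block matrix N(X,s) = [[X, (X-sI)*], [(X-sI)*, X]] is a normal matrix. -/
import Mathlib


open Matrix in
theorem stmt_0 (n : ℕ) (X : Matrix (Fin n) (Fin n) ℂ) (s : ℂ) :
    let N : Matrix (Fin n ⊕ Fin n) (Fin n ⊕ Fin n) ℂ :=
      Matrix.fromBlocks X (X - s • 1)ᴴ (X - s • 1)ᴴ X
    N * Nᴴ = Nᴴ * N := by
  intro N
  have h : (X - s • 1)ᴴ = Xᴴ - (starRingEnd ℂ) s • 1 := by
    simp [Matrix.conjTranspose_smul]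
  have h2 : (Xᴴ - (starRingEnd ℂ) s • 1)ᴴ = X - s • 1 := by
    simp [Matrix.conjTranspose_smul]
  simp only [N, Matrix.fromBlocks_conjTranspose, Matrix.fromBlocks_multiply, h, h2,
    Matrix.conjTranspose_conjTranspose]
  congr 1 <;>
  · simp only [Matrix.sub_mul, Matrix.mul_sub, Matrix.smul_mul, Matrix.mul_smul,
      Matrix.one_mul, Matrix.mul_one, smul_smul, smul_add, smul_sub, mul_comm]
    abel
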